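/- If the unconfoundedness assumption t ⫫ (y(0), y(1)) | X holds together with positivity 0 < P(t = 1 | X = x) < 1 for all x, then the average treatment effect E[y(1) − y(0)] is identified from the observational distribution as E_X[ E[y | t=1, X] − E[y | t=0, X] ]. -/

import Mathlib

attribute [local instance] Classical.propDecidable

/-- Probability of an event under a pmf `p` on a finite space. -/
noncomputable def prob {Ω : Type} [Fintype Ω] (p : Ω → ℝ) (E : Set Ω) : ℝ :=
  ∑ ω, if ω ∈ E then p ω else 0

/-- Conditional probability `P(A | B)` under `p`. -/
noncomputable def condProb {Ω : Type} [Fintype Ω] (p : Ω → ℝ) (A B : Set Ω) : ℝ :=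
  prob p (A ∩ B) / prob p B

/-- Conditional expectation `E[f | E]` under `p`. -/
noncomputable def condExp {Ω : Type} [Fintype Ω] (p : Ω → ℝ) (f : Ω → ℝ) (E : Set Ω) : ℝ :=
  (∑ ω, if ω ∈ E then p ω * f ω else 0) / prob p E

/-!
Stratify by `X = x`. Within a stratum, unconfoundedness makes the law of `(y(0), y(1))`
the same on the treated and on the whole stratum, so after splitting the sums over the
finitely many values of `(y(0), y(1))` one gets
`P(X = x) · E[y | t = 1, X = x] = E[y(1); X = x]`, and likewise for `t = 0`; positivity is
exactly what makes both conditional expectations honest quotients. Summing the strata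
gives `E[y(1) − y(0)]`.
-/

noncomputable def expectOn {Ω : Type} [Fintype Ω] (p : Ω → ℝ) (f : Ω → ℝ) (E : Set Ω) :
    ℝ :=
  ∑ ω, if ω ∈ E then p ω * f ω else 0

section

variable {Ω : Type} [Fintype Ω] (p : Ω → ℝ)

theorem expectOn_congr {f g : Ω → ℝ} {E : Set Ω} (h : ∀ ω ∈ E, f ω = g ω) :
    expectOn p f E = expectOn p g E :=
  Finset.sum_congr rfl fun ω _ => by
    split_ifs with hω
    · rw [h ω hω]
    · rfl

theorem expectOn_sub (f g : Ω → ℝ) (E : Set Ω) :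
    expectOn p (fun ω => f ω - g ω) E = expectOn p f E - expectOn p g E := by
  simp only [expectOn, ← Finset.sum_sub_distrib]
  refine Finset.sum_congr rfl fun ω _ => ?_
  split_ifs
  · rw [mul_sub]
  · rw [sub_zero]

theorem sum_expectOn_fiber {𝒳 : Type} [Fintype 𝒳] (f : Ω → ℝ) (X : Ω → 𝒳) :
    ∑ x, expectOn p f {ω | X ω = x} = ∑ ω, p ω * f ω := by
  unfold expectOn
  rw [Finset.sum_comm]
  simp [Finset.sum_ite_eq]

theorem expectOn_comp_eq_sum_fiber {α : Type} (Z : Ω → α) (g : α → ℝ) (E : Set Ω) :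
    expectOn p (g ∘ Z) E
      = ∑ z ∈ Finset.univ.image Z, g z * prob p ({ω | Z ω = z} ∩ E) := by
  simp only [prob, Finset.mul_sum]
  rw [Finset.sum_comm]
  simp [expectOn, ite_and, mul_comm]

theorem expectOn_inter_mul_prob_of_condIndep {α : Type} (Z : Ω → α) (g : α → ℝ)
    (A B : Set Ω)
    (hindep : ∀ z, prob p ({ω | Z ω = z} ∩ (A ∩ B)) * prob p B
      = prob p ({ω | Z ω = z} ∩ B) * prob p (A ∩ B)) :
    expectOn p (g ∘ Z) (A ∩ B) * prob p B = expectOn p (g ∘ Z) B * prob p (A ∩ B) := by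
  simp only [expectOn_comp_eq_sum_fiber, Finset.sum_mul, mul_assoc, hindep]

theorem prob_mul_condExp_of_condIndep {α : Type} (Z : Ω → α) (g : α → ℝ) {f : Ω → ℝ}
    {A B : Set Ω} (hf : ∀ ω ∈ A, f ω = g (Z ω)) (hAB : prob p (A ∩ B) ≠ 0)
    (hindep : ∀ z, prob p ({ω | Z ω = z} ∩ (A ∩ B)) * prob p B
      = prob p ({ω | Z ω = z} ∩ B) * prob p (A ∩ B)) :
    prob p B * condExp p f (A ∩ B) = expectOn p (g ∘ Z) B := by
  have hfA : expectOn p f (A ∩ B) = expectOn p (g ∘ Z) (A ∩ B) :=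
    expectOn_congr p fun ω hω => hf ω hω.1
  change prob p B * (expectOn p f (A ∩ B) / prob p (A ∩ B)) = _
  rw [hfA, mul_div_assoc', div_eq_iff hAB, mul_comm,
    expectOn_inter_mul_prob_of_condIndep p Z g A B hindep]

theorem prob_inter_add_prob_compl_inter (A B : Set Ω) :
    prob p (A ∩ B) + prob p (Aᶜ ∩ B) = prob p B := by
  simp only [prob, ← Finset.sum_add_distrib]
  refine Finset.sum_congr rfl fun ω _ => ?_
  by_cases hA : ω ∈ A <;> by_cases hB : ω ∈ B <;> simp [hA, hB]

theorem prob_ne_zero_of_condProb_pos {A B : Set Ω} (h : 0 < condProb p A B) :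
    prob p (A ∩ B) ≠ 0 ∧ prob p B ≠ 0 := by
  constructor <;> intro h0 <;> simp [condProb, h0] at h

theorem prob_compl_inter_ne_zero_of_condProb_lt_one {A B : Set Ω} (hB : prob p B ≠ 0)
    (h : condProb p A B < 1) : prob p (Aᶜ ∩ B) ≠ 0 := by
  intro h0
  have hAB : prob p (A ∩ B) = prob p B := by
    linarith [prob_inter_add_prob_compl_inter p A B]
  simp [condProb, hAB, hB] at h

end

theorem stmt_17_general {Ω 𝒳 : Type} [Fintype Ω] [Fintype 𝒳]
    (p : Ω → ℝ)
    (t : Ω → Bool) (y0 y1 : Ω → ℝ) (X : Ω → 𝒳)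
    -- observed outcome
    (y : Ω → ℝ) (hy : ∀ ω, y ω = if t ω then y1 ω else y0 ω)
    -- unconfoundedness: (y(0), y(1)) ⫫ t | X
    (hunconf : ∀ (a b : ℝ) (tv : Bool) (x : 𝒳),
      prob p {ω | y0 ω = a ∧ y1 ω = b ∧ t ω = tv ∧ X ω = x} * prob p {ω | X ω = x}
        = prob p {ω | y0 ω = a ∧ y1 ω = b ∧ X ω = x} *
            prob p {ω | t ω = tv ∧ X ω = x})
    -- positivity: 0 < P(t = 1 | X = x) < 1 for all x
    (hposit : ∀ x : 𝒳, 0 < condProb p {ω | t ω = true} {ω | X ω = x} ∧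
      condProb p {ω | t ω = true} {ω | X ω = x} < 1) :
    (∑ ω, p ω * (y1 ω - y0 ω))
      = ∑ x : 𝒳, prob p {ω | X ω = x} *
          (condExp p y {ω | t ω = true ∧ X ω = x} -
            condExp p y {ω | t ω = false ∧ X ω = x}) := by
  have hprob : ∀ tv x, prob p ({ω | t ω = tv} ∩ {ω | X ω = x}) ≠ 0 := by
    intro tv x
    obtain ⟨htreated, hX⟩ := prob_ne_zero_of_condProb_pos p (hposit x).1
    cases tv
    · convert prob_compl_inter_ne_zero_of_condProb_lt_one p hX (hposit x).2 using 3
      ext ω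
      simp
    · exact htreated
  have hstratum : ∀ (tv : Bool) (x : 𝒳),
      prob p {ω | X ω = x} * condExp p y {ω | t ω = tv ∧ X ω = x}
        = expectOn p (fun ω => if tv then y1 ω else y0 ω) {ω | X ω = x} := by
    intro tv x
    refine prob_mul_condExp_of_condIndep p (fun ω => (y0 ω, y1 ω))
      (fun z => if tv then z.2 else z.1) (fun ω hω => ?_) (hprob tv x) fun z => ?_
    · rw [hy, show t ω = tv from hω]
    · have hjoint : ∀ E : Set Ω,
          {ω | (y0 ω, y1 ω) = z} ∩ E = {ω | y0 ω = z.1 ∧ y1 ω = z.2 ∧ ω ∈ E} := by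
        intro E; ext ω; simp [Prod.ext_iff, and_assoc]
      rw [hjoint, hjoint]
      exact hunconf z.1 z.2 tv x
  calc ∑ ω, p ω * (y1 ω - y0 ω)
      = ∑ x, expectOn p (fun ω => y1 ω - y0 ω) {ω | X ω = x} :=
        (sum_expectOn_fiber p _ X).symm
    _ = _ := Finset.sum_congr rfl fun x _ => by
      rw [mul_sub, hstratum, hstratum, expectOn_sub]
      rfl

/-- if unconfoundedness `(y(0), y(1)) ⫫ t | X` holds together with
positivity `0 < P(t = 1 | X = x) < 1` for all `x`, then the average treatment effect
`E[y(1) − y(0)]` is identified from the observational distribution as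
`E_X[ E[y | t=1, X] − E[y | t=0, X] ]`. -/
theorem stmt_17 {Ω 𝒳 : Type} [Fintype Ω] [Fintype 𝒳]
    (p : Ω → ℝ) (hnonneg : ∀ ω, 0 ≤ p ω) (hsum : ∑ ω, p ω = 1)
    (t : Ω → Bool) (y0 y1 : Ω → ℝ) (X : Ω → 𝒳)
    -- observed outcome
    (y : Ω → ℝ) (hy : ∀ ω, y ω = if t ω then y1 ω else y0 ω)
    -- unconfoundedness: (y(0), y(1)) ⫫ t | X
    (hunconf : ∀ (a b : ℝ) (tv : Bool) (x : 𝒳),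
      prob p {ω | y0 ω = a ∧ y1 ω = b ∧ t ω = tv ∧ X ω = x} * prob p {ω | X ω = x}
        = prob p {ω | y0 ω = a ∧ y1 ω = b ∧ X ω = x} *
            prob p {ω | t ω = tv ∧ X ω = x})
    -- positivity: 0 < P(t = 1 | X = x) < 1 for all x
    (hposit : ∀ x : 𝒳, 0 < condProb p {ω | t ω = true} {ω | X ω = x} ∧
      condProb p {ω | t ω = true} {ω | X ω = x} < 1) :
    (∑ ω, p ω * (y1 ω - y0 ω))
      = ∑ x : 𝒳, prob p {ω | X ω = x} *
          (condExp p y {ω | t ω = true ∧ X ω = x} -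
            condExp p y {ω | t ω = false ∧ X ω = x}) :=
  stmt_17_general p t y0 y1 X y hy hunconf hposit
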